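/- arXiv:2512.16979 — 6 statements merged into one kernel-verified Lean document; each statement's English description precedes it below -/
import Mathlib

section
/- Let A₁, A₂ ⊆ Fin n be nonempty subsets with A₁ ≠ Fin n and A₂ ≠ Fin n, and let B, D ⊆ R be disjoint with B ∪ D = R and |D| = 2, such that R/∼_{A₁} = {B, D}, R/∼_{A₁ᶜ} consists of all singletons {ψ} for ψ ∈ R, R/∼_{A₂} = {B} together with the singletons of the elements of D, and R/∼_{A₂ᶜ}} consists of the singletons of the elements of B together with {D}. If moreover |B| ≥ 2, then A₁ is not equivalent to A₂ under ∼_R, and the cardinality of R satisfies 4 ≤ |R| ≤ 2^{n − |A₁ ∪ A₂|} + 2. -/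
open Finset

/-- Restriction of a computational basis state `ψ : Fin n → Bool` to a subsystem `A`. -/
def restrict {n : ℕ} (ψ : Fin n → Bool) (A : Finset (Fin n)) : {x // x ∈ A} → Bool :=
  fun a => ψ a.1

/-- The quotient set `R/∼_A`: the set of equivalence classes of the relation
`ψ ∼_A φ ↔ ψ|_A = φ|_A` on `R`. -/
def classes {n : ℕ} (R : Finset (Fin n → Bool)) (A : Finset (Fin n)) :
    Set (Set (Fin n → Bool)) :=
  {C | ∃ ψ ∈ R, C = {φ | φ ∈ R ∧ restrict φ A = restrict ψ A}}

/-- `A₁ ∼_R A₂`: the unordered pairs of quotient sets coincide. -/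
def simR {n : ℕ} (R : Finset (Fin n → Bool)) (A₁ A₂ : Finset (Fin n)) : Prop :=
  ({classes R A₁, classes R A₁ᶜ} : Set (Set (Set (Fin n → Bool)))) =
    {classes R A₂, classes R A₂ᶜ}

/-- The reduced density matrix with respect to the subsystem `A` of the pure state
`Ψ = Σ_{ψ ∈ R} c(ψ) ψ`. -/
noncomputable def rho {n : ℕ} (R : Finset (Fin n → Bool)) (c : (Fin n → Bool) → ℂ)
    (A : Finset (Fin n)) :
    Matrix ({x // x ∈ A} → Bool) ({x // x ∈ A} → Bool) ℂ := fun x y =>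
  ∑ ψ ∈ R, ∑ φ ∈ R,
    if restrict ψ A = x ∧ restrict φ A = y ∧ restrict ψ Aᶜ = restrict φ Aᶜ then
      c ψ * (starRingEnd ℂ) (c φ)
    else 0

lemma coe_ne_singleton_aux {α : Type*} (B : Finset α) (ψ : α) (hB : 2 ≤ B.card) :
    (↑B : Set α) ≠ {ψ} := by
  obtain ⟨a, ha, b, hb, hab⟩ := Finset.one_lt_card.mp hB
  intro h
  have ha' : a ∈ (↑B : Set α) := ha
  have hb' : b ∈ (↑B : Set α) := hb
  rw [h] at ha' hb'
  exact hab (ha'.trans hb'.symm)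

/-- under the special structure of the quotient sets given by `B` and `D`,
if moreover `|B| ≥ 2`, then `A₁ ≁_R A₂` and `4 ≤ |R| ≤ 2^(n - |A₁ ∪ A₂|) + 2`. -/
theorem not_sim_and_card_bounds {n : ℕ}
    (R B D : Finset (Fin n → Bool)) (hR : R.Nonempty)
    (hdisj : Disjoint B D) (hBD : B ∪ D = R) (hD : D.card = 2)
    (A₁ A₂ : Finset (Fin n)) (hA₁ : A₁.Nonempty) (hA₂ : A₂.Nonempty)
    (hA₁' : A₁ ≠ Finset.univ) (hA₂' : A₂ ≠ Finset.univ)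
    (h1 : classes R A₁ = {(↑B : Set (Fin n → Bool)), (↑D : Set (Fin n → Bool))})
    (h2 : classes R A₁ᶜ = {C | ∃ ψ ∈ R, C = {ψ}})
    (h3 : classes R A₂ = insert (↑B : Set (Fin n → Bool)) {C | ∃ ψ ∈ D, C = {ψ}})
    (h4 : classes R A₂ᶜ = insert (↑D : Set (Fin n → Bool)) {C | ∃ ψ ∈ B, C = {ψ}})
    (hB : 2 ≤ B.card) :
    ¬ simR R A₁ A₂ ∧ 4 ≤ R.card ∧ R.card ≤ 2 ^ (n - (A₁ ∪ A₂).card) + 2 := by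
  have hRcard : R.card = B.card + 2 := by
    rw [← hBD, Finset.card_union_of_disjoint hdisj, hD]
  refine ⟨?_, ?_, ?_⟩
  · -- not simR
    intro h
    have hmem : classes R A₁ ∈ ({classes R A₂, classes R A₂ᶜ} :
        Set (Set (Set (Fin n → Bool)))) := by
      rw [← h]; left; rfl
    rcases hmem with hc | hc
    · -- classes R A₁ = classes R A₂
      obtain ⟨ψ, hψ⟩ : D.Nonempty := Finset.card_pos.mp (by omega)
      have hs : ({ψ} : Set (Fin n → Bool)) ∈ classes R A₁ := by
        rw [hc, h3]; right; exact ⟨ψ, hψ, rfl⟩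
      rw [h1] at hs
      rcases hs with hs | hs
      · exact coe_ne_singleton_aux B ψ hB hs.symm
      · exact coe_ne_singleton_aux D ψ (by omega) hs.symm
    · -- classes R A₁ = classes R A₂ᶜ
      obtain ⟨ψ, hψ⟩ : B.Nonempty := Finset.card_pos.mp (by omega)
      have hs : ({ψ} : Set (Fin n → Bool)) ∈ classes R A₁ := by
        rw [hc, h4]; right; exact ⟨ψ, hψ, rfl⟩
      rw [h1] at hs
      rcases hs with hs | hs
      · exact coe_ne_singleton_aux B ψ hB hs.symm
      · exact coe_ne_singleton_aux D ψ (by omega) hs.symm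
  · omega
  · -- upper bound: B.card ≤ 2 ^ (n - (A₁ ∪ A₂).card)
    have hB1 : (↑B : Set (Fin n → Bool)) ∈ classes R A₁ := by rw [h1]; left; rfl
    have hB2 : (↑B : Set (Fin n → Bool)) ∈ classes R A₂ := by rw [h3]; left; rfl
    obtain ⟨ψ₁, -, hψ₁⟩ := hB1
    obtain ⟨ψ₂, -, hψ₂⟩ := hB2
    set S := (A₁ ∪ A₂)ᶜ with hS
    have hinj : Set.InjOn (fun φ => restrict φ S) ↑B := by
      intro φ hφ φ' hφ' heq
      have hφ1 : restrict φ A₁ = restrict ψ₁ A₁ := by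
        have : φ ∈ ({φ | φ ∈ R ∧ restrict φ A₁ = restrict ψ₁ A₁} :
            Set (Fin n → Bool)) := hψ₁ ▸ hφ
        exact this.2
      have hφ'1 : restrict φ' A₁ = restrict ψ₁ A₁ := by
        have : φ' ∈ ({φ | φ ∈ R ∧ restrict φ A₁ = restrict ψ₁ A₁} :
            Set (Fin n → Bool)) := hψ₁ ▸ hφ'
        exact this.2
      have hφ2 : restrict φ A₂ = restrict ψ₂ A₂ := by
        have : φ ∈ ({φ | φ ∈ R ∧ restrict φ A₂ = restrict ψ₂ A₂} :
            Set (Fin n → Bool)) := hψ₂ ▸ hφ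
        exact this.2
      have hφ'2 : restrict φ' A₂ = restrict ψ₂ A₂ := by
        have : φ' ∈ ({φ | φ ∈ R ∧ restrict φ A₂ = restrict ψ₂ A₂} :
            Set (Fin n → Bool)) := hψ₂ ▸ hφ'
        exact this.2
      funext i
      by_cases hi1 : i ∈ A₁
      · have := congrFun (hφ1.trans hφ'1.symm) ⟨i, hi1⟩
        exact this
      · by_cases hi2 : i ∈ A₂
        · exact congrFun (hφ2.trans hφ'2.symm) ⟨i, hi2⟩
        · have hiS : i ∈ S := by
            simp [hS, hi1, hi2]
          exact congrFun heq ⟨i, hiS⟩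
    have hcard : B.card ≤ Fintype.card ({x // x ∈ S} → Bool) := by
      have := Finset.card_le_card_of_injOn (fun φ => restrict φ S)
        (fun _ _ => Finset.mem_univ _) (fun a ha b hb => hinj ha hb)
      simpa using this
    have : Fintype.card ({x // x ∈ S} → Bool) = 2 ^ (n - (A₁ ∪ A₂).card) := by
      rw [Fintype.card_fun, Fintype.card_coe, Fintype.card_bool, hS,
        Finset.card_compl, Fintype.card_fin]
    omega
end

section
/- For every integer n ≥ 4 there exist a set R of computational basis states on Fin n with |R| = n and nonempty subsets A₁, A₂ ⊆ Fin n with A₁ ≠ Fin n and A₂ ≠ Fin n such that A₁ is not equivalent to A₂ under ∼_R, yet for every coefficient vector c : R → ℂ with Σ_{ψ∈R} |c(ψ)|² = 1 the spectra of the reduced density matrices coincide: Spec(ρ_{A₁}) = Spec(ρ_{A₂}). -/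
open Finset

section EigenChar
variable {I : Type*} [Fintype I] [DecidableEq I]

lemma mem_spectrum_iff_eigen (M : Matrix I I ℂ) (k : ℂ) :
    k ∈ spectrum ℂ M ↔ ∃ v, v ≠ 0 ∧ M.mulVec v = k • v := by
  rw [spectrum.mem_iff, Matrix.isUnit_iff_isUnit_det, isUnit_iff_ne_zero, not_ne_iff,
    ← Matrix.exists_mulVec_eq_zero_iff]
  have key : ∀ v, (algebraMap ℂ (Matrix I I ℂ) k - M).mulVec v = k • v - M.mulVec v := by
    intro v
    rw [Algebra.algebraMap_eq_smul_one, Matrix.sub_mulVec, Matrix.smul_mulVec,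
      Matrix.one_mulVec]
  constructor
  · rintro ⟨v, hv, h⟩
    exact ⟨v, hv, by rw [key v, sub_eq_zero] at h; exact h.symm⟩
  · rintro ⟨v, hv, h⟩
    exact ⟨v, hv, by rw [key v, sub_eq_zero]; exact h.symm⟩

end EigenChar

section Abstract
variable {m : ℕ} {I J : Type*} [Fintype I] [DecidableEq I] [DecidableEq J]

noncomputable def Mabs (π : Fin m → I) (q : Fin m → J) (d : Fin m → ℂ) : Matrix I I ℂ :=
  fun x y => ∑ i, ∑ j,
    if π i = x ∧ π j = y ∧ q i = q j then d i * (starRingEnd ℂ) (d j) else 0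

noncomputable def Tg (γ : Fin m → Fin 3) (d : Fin m → ℂ) (g : Fin 3) : ℂ :=
  ∑ i, if γ i = g then d i * (starRingEnd ℂ) (d i) else 0

lemma mulVec_Mabs (π : Fin m → I) (q : Fin m → J) (d : Fin m → ℂ) (v : I → ℂ) (x : I) :
    (Mabs π q d).mulVec v x
      = ∑ i, if π i = x then
          d i * (∑ j, if q i = q j then (starRingEnd ℂ) (d j) * v (π j) else 0) else 0 := by
  unfold Mabs Matrix.mulVec dotProduct
  simp only [Finset.sum_mul, ite_mul, zero_mul]
  rw [Finset.sum_comm]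
  refine Finset.sum_congr rfl fun i _ => ?_
  rw [Finset.sum_comm]
  by_cases hπ : π i = x
  · simp only [hπ, if_true, Finset.mul_sum]
    refine Finset.sum_congr rfl fun j _ => ?_
    rw [Fintype.sum_eq_single (π j) (fun y hy => by
      simp only [ite_eq_right_iff]
      rintro ⟨-, h2, -⟩; exact absurd h2 (Ne.symm hy))]
    by_cases hq : q i = q j
    · simp [hq, mul_assoc]
    · simp [hq, fun h : q j = q i => hq h.symm]
  · simp only [hπ, if_false]
    refine Finset.sum_eq_zero fun j _ => Finset.sum_eq_zero fun y _ => ?_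
    simp [hπ]

variable {γ : Fin m → Fin 3} {blk : Fin 3 → Bool} {π : Fin m → I} {q : Fin m → J}
  {d : Fin m → ℂ}

section Hyps
variable
    (H1 : ∀ i j, q i = q j ↔ (γ i = γ j ∧ (blk (γ i) = true ∨ i = j)))
    (H2 : ∀ i j, π i = π j ↔ (γ i = γ j ∧ (blk (γ i) = false ∨ i = j)))

include H1 in
lemma U_blk (i : Fin m) (hb : blk (γ i) = true) (f : Fin m → ℂ) :
    (∑ j, if q i = q j then f j else 0) = ∑ j, if γ j = γ i then f j else 0 :=
  Finset.sum_congr rfl fun j _ => if_congr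
    ⟨fun h => ((H1 i j).1 h).1.symm, fun h => (H1 i j).2 ⟨h.symm, Or.inl hb⟩⟩ rfl rfl

include H1 in
lemma U_diag (i : Fin m) (hb : blk (γ i) = false) (f : Fin m → ℂ) :
    (∑ j, if q i = q j then f j else 0) = f i := by
  rw [Fintype.sum_eq_single i (fun j hj => ?_)]
  · simp
  · simp only [ite_eq_right_iff]
    intro h
    rcases ((H1 i j).1 h).2 with hb' | he
    · rw [hb] at hb'; exact absurd hb' (by simp)
    · exact absurd he.symm hj

include H2 in
lemma pi_ne_of_group_ne (i j : Fin m) (h : γ i ≠ γ j) : π i ≠ π j :=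
  fun hh => h ((H2 i j).1 hh).1

include H2 in
lemma pi_eq_iff_eq_of_blk (i j : Fin m) (hb : blk (γ i) = true) : π i = π j ↔ i = j := by
  constructor
  · intro h
    rcases ((H2 i j).1 h).2 with hb' | he
    · rw [hb] at hb'; exact absurd hb' (by simp)
    · exact he
  · rintro rfl; rfl

include H2 in
lemma pi_eq_of_diag (i j : Fin m) (hb : blk (γ i) = false) (h : γ i = γ j) : π i = π j :=
  (H2 i j).2 ⟨h, Or.inl hb⟩

end Hyps

set_option linter.unusedSectionVars false

lemma fin3_cases (g : Fin 3) : g = 0 ∨ g = 1 ∨ g = 2 := by revert g; decide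

section Main
variable
    (H1 : ∀ i j, q i = q j ↔ (γ i = γ j ∧ (blk (γ i) = true ∨ i = j)))
    (H2 : ∀ i j, π i = π j ↔ (γ i = γ j ∧ (blk (γ i) = false ∨ i = j)))
    (i₀ i₁ : Fin m) (hne : i₀ ≠ i₁) (hγ01 : γ i₀ = γ i₁) (hblk0 : blk (γ i₀) = true)

include H1 H2 i₀ i₁ hne hγ01 hblk0

lemma eig_zero : ∃ v : I → ℂ, v ≠ 0 ∧ (Mabs π q d).mulVec v = (0:ℂ) • v := by
  have hblk1 : blk (γ i₁) = true := hγ01 ▸ hblk0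
  -- helper for the case where some d is nonzero
  have main : ∀ a b : Fin m, a ≠ b → γ a = γ b → blk (γ a) = true → d b ≠ 0 →
      ∃ v : I → ℂ, v ≠ 0 ∧ (Mabs π q d).mulVec v = (0:ℂ) • v := by
    intro a b hab hγab hba hdb
    have hbb : blk (γ b) = true := hγab ▸ hba
    set v : I → ℂ := fun x => (starRingEnd ℂ) (d b) * (if x = π a then 1 else 0)
        - (starRingEnd ℂ) (d a) * (if x = π b then 1 else 0) with hvdef
    have hπab : π a ≠ π b := fun h => hab ((pi_eq_iff_eq_of_blk H2 a b hba).1 h)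
    have hva : ∀ j, v (π j) = (starRingEnd ℂ) (d b) * (if j = a then 1 else 0)
        - (starRingEnd ℂ) (d a) * (if j = b then 1 else 0) := by
      intro j
      have e1 : (π j = π a) ↔ (j = a) := by
        rw [eq_comm, pi_eq_iff_eq_of_blk H2 a j hba, eq_comm]
      have e2 : (π j = π b) ↔ (j = b) := by
        rw [eq_comm, pi_eq_iff_eq_of_blk H2 b j hbb, eq_comm]
      simp only [hvdef, e1, e2]
    refine ⟨v, ?_, ?_⟩
    · intro h0
      have h := congrFun h0 (π a)
      have h' : (starRingEnd ℂ) (d b) = 0 := by simpa [hvdef, hπab] using h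
      exact (map_ne_zero (starRingEnd ℂ)).mpr hdb h'
    · funext x
      rw [mulVec_Mabs]
      have hU : ∀ i : Fin m,
          (∑ j, if q i = q j then (starRingEnd ℂ) (d j) * v (π j) else 0) = 0 := by
        intro i
        by_cases hbi : blk (γ i) = true
        · rw [U_blk H1 i hbi]
          have hvan : ∀ j, j ∉ ({a, b} : Finset (Fin m)) →
              (if γ j = γ i then (starRingEnd ℂ) (d j) * v (π j) else 0) = 0 := by
            intro j hj
            simp only [Finset.mem_insert, Finset.mem_singleton, not_or] at hj
            rw [hva j, if_neg hj.1, if_neg hj.2, mul_zero, mul_zero, sub_zero, mul_zero,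
              ite_self]
          rw [← Finset.sum_subset (Finset.subset_univ ({a,b} : Finset (Fin m)))
            (fun j _ hj => hvan j hj), Finset.sum_pair hab]
          rw [hva a, hva b]
          simp only [if_pos rfl, if_neg hab, if_neg (Ne.symm hab), mul_one, mul_zero,
            sub_zero, zero_sub]
          by_cases hγa : γ a = γ i
          · rw [if_pos hγa, if_pos (hγab.symm.trans hγa)]; ring
          · rw [if_neg hγa, if_neg (fun h => hγa (hγab.trans h)), add_zero]
        · have hbi' : blk (γ i) = false := by
            cases hh : blk (γ i); rfl; exact absurd hh hbi
          rw [U_diag H1 i hbi', hva i]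
          have hia : i ≠ a := fun h => hbi (h ▸ hba)
          have hib : i ≠ b := fun h => hbi (h ▸ hbb)
          rw [if_neg hia, if_neg hib, mul_zero, mul_zero, sub_zero, mul_zero]
      simp only [hU, mul_zero, ite_self, Finset.sum_const_zero, Pi.smul_apply,
        smul_eq_mul, zero_mul]
  by_cases hd : d i₁ ≠ 0
  · exact main i₀ i₁ hne hγ01 hblk0 hd
  · by_cases hd0 : d i₀ ≠ 0
    · exact main i₁ i₀ (Ne.symm hne) hγ01.symm (hγ01 ▸ hblk0) hd0
    · -- both zero : use delta at π i₀
      push_neg at hd hd0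
      set v : I → ℂ := fun x => if x = π i₀ then 1 else 0 with hvdef
      refine ⟨v, ?_, ?_⟩
      · intro h0
        have := congrFun h0 (π i₀)
        simp [hvdef] at this
      · funext x
        rw [mulVec_Mabs]
        have hU : ∀ i : Fin m,
            (∑ j, if q i = q j then (starRingEnd ℂ) (d j) * v (π j) else 0) = 0 := by
          intro i
          refine Finset.sum_eq_zero fun j _ => ?_
          have hval : (starRingEnd ℂ) (d j) * v (π j) = 0 := by
            by_cases hj : π j = π i₀
            · have hji : j = i₀ := by
                rcases ((H2 j i₀).1 hj) with ⟨hg, hf | he⟩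
                · exfalso
                  have hbt : blk (γ j) = true := by rw [hg]; exact hblk0
                  rw [hbt] at hf; exact absurd hf (by decide)
                · exact he
              rw [hji, hd0, map_zero, zero_mul]
            · simp [hvdef, hj]
          rw [hval, ite_self]
        simp only [hU, mul_zero, ite_self, Finset.sum_const_zero, Pi.smul_apply,
          smul_eq_mul, zero_mul]
lemma eig_val (g : Fin 3) :
    ∃ v : I → ℂ, v ≠ 0 ∧ (Mabs π q d).mulVec v = (Tg γ d g) • v := by
  by_cases hb : blk g = true
  · by_cases hex : ∃ i₂, γ i₂ = g ∧ d i₂ ≠ 0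
    · obtain ⟨i₂, hgi₂, hdi₂⟩ := hex
      set v : I → ℂ := fun x => ∑ i, if γ i = g ∧ π i = x then d i else 0 with hvdef
      have hvπ : ∀ j, γ j = g → v (π j) = d j := by
        intro j hj
        show (∑ i, if γ i = g ∧ π i = π j then d i else 0) = d j
        rw [Fintype.sum_eq_single j (fun i hi => ?_)]
        · rw [if_pos ⟨hj, rfl⟩]
        · simp only [ite_eq_right_iff]
          rintro ⟨hgi, hπi⟩
          exfalso
          rcases ((H2 i j).1 hπi) with ⟨-, hf | he⟩
          · rw [hgi, hb] at hf; exact absurd hf (by decide)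
          · exact hi he
      have hvπ' : ∀ j, γ j ≠ g → v (π j) = 0 := by
        intro j hj
        show (∑ i, if γ i = g ∧ π i = π j then d i else 0) = 0
        refine Finset.sum_eq_zero fun i _ => ?_
        simp only [ite_eq_right_iff]
        rintro ⟨hgi, hπi⟩
        exact absurd (((H2 i j).1 hπi).1.symm.trans hgi) hj
      refine ⟨v, ?_, ?_⟩
      · intro h0
        have h := congrFun h0 (π i₂)
        rw [hvπ i₂ hgi₂, Pi.zero_apply] at h
        exact hdi₂ h
      · funext x
        rw [mulVec_Mabs]
        have key : ∀ i : Fin m, (if π i = x then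
            d i * (∑ j, if q i = q j then (starRingEnd ℂ) (d j) * v (π j) else 0) else 0)
            = Tg γ d g * (if γ i = g ∧ π i = x then d i else 0) := by
          intro i
          by_cases hgi : γ i = g
          · have hbi : blk (γ i) = true := by rw [hgi]; exact hb
            have hUi : (∑ j, if q i = q j then (starRingEnd ℂ) (d j) * v (π j) else 0)
                = Tg γ d g := by
              rw [U_blk H1 i hbi]
              unfold Tg
              refine Finset.sum_congr rfl fun j _ => ?_
              by_cases hgj : γ j = g
              · rw [if_pos (hgj.trans hgi.symm), if_pos hgj, hvπ j hgj]; ring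
              · rw [if_neg (fun h => hgj (h.trans hgi)), if_neg hgj]
            rw [hUi]
            by_cases hπ : π i = x
            · rw [if_pos hπ, if_pos ⟨hgi, hπ⟩]; ring
            · rw [if_neg hπ, if_neg (show ¬(γ i = g ∧ π i = x) from fun h => hπ h.2),
                mul_zero]
          · have hUi : (∑ j, if q i = q j then (starRingEnd ℂ) (d j) * v (π j) else 0)
                = 0 := by
              by_cases hbi : blk (γ i) = true
              · rw [U_blk H1 i hbi]
                refine Finset.sum_eq_zero fun j _ => ?_
                by_cases hgj : γ j = γ i
                · rw [if_pos hgj, hvπ' j (fun h => hgi (hgj.symm.trans h)), mul_zero]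
                · rw [if_neg hgj]
              · have hbi' : blk (γ i) = false := by
                  cases hh : blk (γ i); rfl; exact absurd hh hbi
                rw [U_diag H1 i hbi', hvπ' i hgi, mul_zero]
            rw [hUi]
            simp [show ¬(γ i = g ∧ π i = x) from fun h => hgi h.1]
        calc (∑ i, if π i = x then
            d i * (∑ j, if q i = q j then (starRingEnd ℂ) (d j) * v (π j) else 0) else 0)
            = ∑ i, Tg γ d g * (if γ i = g ∧ π i = x then d i else 0) :=
              Finset.sum_congr rfl fun i _ => key i
          _ = Tg γ d g * v x := by rw [← Finset.mul_sum]
          _ = (Tg γ d g • v) x := by simp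
    · push_neg at hex
      have hT0 : Tg γ d g = 0 := by
        unfold Tg
        refine Finset.sum_eq_zero fun i _ => ?_
        by_cases hgi : γ i = g
        · rw [if_pos hgi, hex i hgi, map_zero, mul_zero]
        · rw [if_neg hgi]
      rw [hT0]
      exact eig_zero H1 H2 i₀ i₁ hne hγ01 hblk0
  · by_cases hex : ∃ i₂, γ i₂ = g
    · obtain ⟨i₂, hgi₂⟩ := hex
      have hbg : blk g = false := by
        cases hh : blk g; rfl; exact absurd hh hb
      set v : I → ℂ := fun x => if x = π i₂ then 1 else 0 with hvdef
      refine ⟨v, ?_, ?_⟩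
      · intro h0
        have h := congrFun h0 (π i₂)
        have : (1:ℂ) = 0 := by
          have h2 : (if π i₂ = π i₂ then (1:ℂ) else 0) = 0 := h
          rwa [if_pos rfl] at h2
        exact one_ne_zero this
      · funext x
        rw [mulVec_Mabs]
        have key : ∀ i : Fin m, (if π i = x then
            d i * (∑ j, if q i = q j then (starRingEnd ℂ) (d j) * v (π j) else 0) else 0)
            = (if γ i = g ∧ x = π i₂ then d i * (starRingEnd ℂ) (d i) else 0) := by
          intro i
          by_cases hgi : γ i = g
          · have hbi : blk (γ i) = false := by rw [hgi]; exact hbg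
            have hππ : π i = π i₂ := pi_eq_of_diag H2 i i₂ hbi (hgi.trans hgi₂.symm)
            rw [U_diag H1 i hbi]
            have hv1 : v (π i) = 1 := by
              show (if π i = π i₂ then (1:ℂ) else 0) = 1
              rw [if_pos hππ]
            rw [hv1, mul_one]
            by_cases hπ : π i = x
            · rw [if_pos hπ, if_pos ⟨hgi, hπ ▸ hππ⟩]
            · rw [if_neg hπ,
                if_neg (show ¬(γ i = g ∧ x = π i₂) from fun h => hπ (hππ.trans h.2.symm))]
          · have hUi : (∑ j, if q i = q j then (starRingEnd ℂ) (d j) * v (π j) else 0)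
                = 0 := by
              by_cases hbi : blk (γ i) = true
              · rw [U_blk H1 i hbi]
                refine Finset.sum_eq_zero fun j _ => ?_
                by_cases hgj : γ j = γ i
                · have hne2 : π j ≠ π i₂ :=
                    pi_ne_of_group_ne H2 j i₂
                      (fun h => hgi (hgj.symm.trans (h.trans hgi₂)))
                  have hv0 : v (π j) = 0 := by
                    show (if π j = π i₂ then (1:ℂ) else 0) = 0
                    rw [if_neg hne2]
                  rw [if_pos hgj, hv0, mul_zero]
                · rw [if_neg hgj]
              · have hbi' : blk (γ i) = false := by
                  cases hh : blk (γ i); rfl; exact absurd hh hbi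
                rw [U_diag H1 i hbi']
                have hne2 : π i ≠ π i₂ :=
                  pi_ne_of_group_ne H2 i i₂ (fun h => hgi (h.trans hgi₂))
                have hv0 : v (π i) = 0 := by
                  show (if π i = π i₂ then (1:ℂ) else 0) = 0
                  rw [if_neg hne2]
                rw [hv0, mul_zero]
            rw [hUi]
            simp [show ¬(γ i = g ∧ x = π i₂) from fun h => hgi h.1]
        calc (∑ i, if π i = x then
            d i * (∑ j, if q i = q j then (starRingEnd ℂ) (d j) * v (π j) else 0) else 0)
            = ∑ i, (if γ i = g ∧ x = π i₂ then d i * (starRingEnd ℂ) (d i) else 0) :=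
              Finset.sum_congr rfl fun i _ => key i
          _ = (Tg γ d g • v) x := by
              by_cases hx : x = π i₂
              · subst hx
                have hvx : v (π i₂) = 1 := by
                  show (if π i₂ = π i₂ then (1:ℂ) else 0) = 1
                  rw [if_pos rfl]
                simp only [eq_self_iff_true, and_true, Pi.smul_apply, smul_eq_mul, hvx,
                  mul_one]
                rfl
              · have hvx : v x = 0 := by
                  show (if x = π i₂ then (1:ℂ) else 0) = 0
                  rw [if_neg hx]
                simp only [hx, and_false, if_false, Finset.sum_const_zero, Pi.smul_apply,
                  smul_eq_mul, hvx, mul_zero]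
    · push_neg at hex
      have hT0 : Tg γ d g = 0 := by
        unfold Tg
        exact Finset.sum_eq_zero fun i _ => by rw [if_neg (hex i)]
      rw [hT0]
      exact eig_zero H1 H2 i₀ i₁ hne hγ01 hblk0

theorem spec_Mabs :
    spectrum ℂ (Mabs π q d) = {Tg γ d 0, Tg γ d 1, Tg γ d 2, (0:ℂ)} := by
  ext k
  rw [mem_spectrum_iff_eigen]
  constructor
  · rintro ⟨v, hv, hev⟩
    obtain ⟨x₀, hx₀⟩ : ∃ x, v x ≠ 0 := Function.ne_iff.mp hv
    have hrow : ∀ x, (∑ i, if π i = x then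
        d i * (∑ j, if q i = q j then (starRingEnd ℂ) (d j) * v (π j) else 0) else 0)
        = k * v x := by
      intro x
      rw [← mulVec_Mabs, hev, Pi.smul_apply, smul_eq_mul]
    have memTg : ∀ a : Fin m, k = Tg γ d (γ a) →
        k ∈ ({Tg γ d 0, Tg γ d 1, Tg γ d 2, (0:ℂ)} : Set ℂ) := by
      intro a hk
      rcases fin3_cases (γ a) with h | h | h <;> rw [h] at hk
      · exact Or.inl hk
      · exact Or.inr (Or.inl hk)
      · exact Or.inr (Or.inr (Or.inl hk))
    by_cases hex : ∃ i, π i = x₀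
    · obtain ⟨a, ha⟩ := hex
      by_cases hba : blk (γ a) = true
      · -- block group
        set S : ℂ := ∑ j, if γ j = γ a then (starRingEnd ℂ) (d j) * v (π j) else 0
          with hSdef
        have hUa : ∀ i, γ i = γ a → k * v (π i) = d i * S := by
          intro i hgi
          have hbi : blk (γ i) = true := by rw [hgi]; exact hba
          have := hrow (π i)
          rw [Fintype.sum_eq_single i (fun i' hi' => ?_)] at this
          · rw [if_pos rfl, U_blk H1 i hbi] at this
            rw [← this]
            congr 1
            rw [hSdef]
            exact Finset.sum_congr rfl fun j _ =>
              if_congr (by rw [hgi]) rfl rfl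
          · simp only [ite_eq_right_iff]
            intro hπ
            exfalso
            rcases ((H2 i' i).1 hπ) with ⟨hg, hf | he⟩
            · rw [hg, hbi] at hf; exact absurd hf (by decide)
            · exact hi' he
        have hkS : k * S = Tg γ d (γ a) * S := by
          rw [hSdef, Finset.mul_sum]
          have step : ∀ j, (k * if γ j = γ a then (starRingEnd ℂ) (d j) * v (π j) else 0)
              = (if γ j = γ a then d j * (starRingEnd ℂ) (d j) else 0) * S := by
            intro j
            by_cases hgj : γ j = γ a
            · rw [if_pos hgj, if_pos hgj]
              have := hUa j hgj
              calc k * ((starRingEnd ℂ) (d j) * v (π j))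
                  = (starRingEnd ℂ) (d j) * (k * v (π j)) := by ring
                _ = (starRingEnd ℂ) (d j) * (d j * S) := by rw [this]
                _ = d j * (starRingEnd ℂ) (d j) * S := by ring
            · rw [if_neg hgj, if_neg hgj, mul_zero, zero_mul]
          calc (∑ j, k * if γ j = γ a then (starRingEnd ℂ) (d j) * v (π j) else 0)
              = ∑ j, (if γ j = γ a then d j * (starRingEnd ℂ) (d j) else 0) * S :=
                Finset.sum_congr rfl fun j _ => step j
            _ = Tg γ d (γ a) * S := by rw [← Finset.sum_mul]; rfl
        by_cases hS : S = 0
        · have h0 : k * v x₀ = 0 := by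
            have := hUa a rfl
            rw [ha] at this
            rw [this, hS, mul_zero]
          have : k = 0 := by
            rcases mul_eq_zero.mp h0 with h | h
            · exact h
            · exact absurd h hx₀
          exact Or.inr (Or.inr (Or.inr this))
        · exact memTg a (mul_right_cancel₀ hS hkS)
      · -- diag group
        have hba' : blk (γ a) = false := by
          cases hh : blk (γ a); rfl; exact absurd hh hba
        have hkey : k * v x₀ = Tg γ d (γ a) * v x₀ := by
          have := hrow x₀
          rw [← this]
          have step : ∀ i, (if π i = x₀ then
              d i * (∑ j, if q i = q j then (starRingEnd ℂ) (d j) * v (π j) else 0) else 0)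
              = (if γ i = γ a then d i * (starRingEnd ℂ) (d i) else 0) * v x₀ := by
            intro i
            by_cases hgi : γ i = γ a
            · have hbi : blk (γ i) = false := by rw [hgi]; exact hba'
              have hππ : π i = π a := pi_eq_of_diag H2 i a hbi hgi
              have hπx : π i = x₀ := hππ.trans ha
              rw [if_pos hπx, if_pos hgi, U_diag H1 i hbi, hπx]
              ring
            · have hπx : π i ≠ x₀ := by
                rw [← ha]
                exact pi_ne_of_group_ne H2 i a hgi
              rw [if_neg hπx, if_neg hgi, zero_mul]
          calc (∑ i, if π i = x₀ then
              d i * (∑ j, if q i = q j then (starRingEnd ℂ) (d j) * v (π j) else 0) else 0)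
              = ∑ i, (if γ i = γ a then d i * (starRingEnd ℂ) (d i) else 0) * v x₀ :=
                Finset.sum_congr rfl fun i _ => step i
            _ = Tg γ d (γ a) * v x₀ := by rw [← Finset.sum_mul]; rfl
        exact memTg a (mul_right_cancel₀ hx₀ hkey)
    · -- empty row
      push_neg at hex
      have h0 : k * v x₀ = 0 := by
        rw [← hrow x₀]
        exact Finset.sum_eq_zero fun i _ => by rw [if_neg (hex i)]
      have : k = 0 := by
        rcases mul_eq_zero.mp h0 with h | h
        · exact h
        · exact absurd h hx₀
      exact Or.inr (Or.inr (Or.inr this))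
  · intro hk
    rcases hk with h | h | h | h
    · exact h ▸ eig_val H1 H2 i₀ i₁ hne hγ01 hblk0 0
    · exact h ▸ eig_val H1 H2 i₀ i₁ hne hγ01 hblk0 1
    · exact h ▸ eig_val H1 H2 i₀ i₁ hne hγ01 hblk0 2
    · exact h ▸ eig_zero H1 H2 i₀ i₁ hne hγ01 hblk0

end Main
end Abstract

section Concrete
variable {n : ℕ}

def st (i : Fin n) : Fin n → Bool := fun j =>
  if i.val = 0 then decide (j.val < 2)
  else if i.val = 1 then decide (j.val < 3)
  else if i.val = 2 then decide (1 ≤ j.val ∧ j.val < 4)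
  else if i.val = 3 then decide (j.val = 0 ∨ (2 ≤ j.val ∧ j.val < 4))
  else decide (j = i)

lemma st_eq_true_iff (i a : Fin n) : st i a = true ↔
    ((i.val = 0 ∧ a.val < 2) ∨ (i.val = 1 ∧ a.val < 3) ∨
     (i.val = 2 ∧ (1 ≤ a.val ∧ a.val < 4)) ∨
     (i.val = 3 ∧ (a.val = 0 ∨ (2 ≤ a.val ∧ a.val < 4))) ∨
     (4 ≤ i.val ∧ a.val = i.val)) := by
  unfold st
  split_ifs with h0 h1 h2 h3 <;>
    simp only [decide_eq_true_eq, Fin.ext_iff] <;> omega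

def A1 (n : ℕ) : Finset (Fin n) := Finset.univ.filter (fun j => 2 ≤ j.val)
def A2 (n : ℕ) : Finset (Fin n) := Finset.univ.filter (fun j => j.val ≤ 2)

lemma memA1 (a : Fin n) : a ∈ A1 n ↔ 2 ≤ a.val := by simp [A1]
lemma memA1c (a : Fin n) : a ∈ (A1 n)ᶜ ↔ a.val < 2 := by
  rw [Finset.mem_compl, memA1]; omega
lemma memA2 (a : Fin n) : a ∈ A2 n ↔ a.val ≤ 2 := by simp [A2]
lemma memA2c (a : Fin n) : a ∈ (A2 n)ᶜ ↔ 3 ≤ a.val := by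
  rw [Finset.mem_compl, memA2]; omega

lemma restrict_eq_iff (ψ φ : Fin n → Bool) (A : Finset (Fin n)) :
    restrict ψ A = restrict φ A ↔ ∀ a : Fin n, a ∈ A → ψ a = φ a :=
  ⟨fun h a ha => congrFun h ⟨a, ha⟩, fun h => funext fun a => h a.1 a.2⟩

lemma st_eq_st_iff (i j a : Fin n) : st i a = st j a ↔ ((st i a = true) ↔ (st j a = true)) := by
  constructor
  · intro h; rw [h]
  · intro h
    cases hi : st i a <;> cases hj : st j a <;> simp_all

variable (hn : 4 ≤ n)
include hn

lemma Hpi1 (i j : Fin n) :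
    restrict (st i) (A1 n) = restrict (st j) (A1 n) ↔
      (i = j ∨ (2 ≤ i.val ∧ i.val ≤ 3 ∧ 2 ≤ j.val ∧ j.val ≤ 3)) := by
  rw [restrict_eq_iff]
  constructor
  · intro h
    have f2 := (st_eq_st_iff i j ⟨2, by omega⟩).mp (h _ ((memA1 _).mpr (by simp)))
    have f3 := (st_eq_st_iff i j ⟨3, by omega⟩).mp (h _ ((memA1 _).mpr (by simp)))
    rw [st_eq_true_iff, st_eq_true_iff] at f2 f3
    norm_num [Fin.val_mk] at f2 f3
    suffices hs : i.val = j.val ∨ (2 ≤ i.val ∧ i.val ≤ 3 ∧ 2 ≤ j.val ∧ j.val ≤ 3) by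
      rcases hs with hs | hs
      · exact Or.inl (Fin.ext hs)
      · exact Or.inr hs
    by_cases h4i : 4 ≤ i.val
    · have hii := (st_eq_st_iff i j i).mp (h _ ((memA1 _).mpr (by omega)))
      rw [st_eq_true_iff, st_eq_true_iff] at hii
      omega
    · by_cases h4j : 4 ≤ j.val
      · have hjj := (st_eq_st_iff i j j).mp (h _ ((memA1 _).mpr (by omega)))
        rw [st_eq_true_iff, st_eq_true_iff] at hjj
        omega
      · omega
  · intro h a ha
    have ha' : 2 ≤ a.val := (memA1 _).mp ha
    rcases h with rfl | hcls
    · rfl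
    · rw [st_eq_st_iff, st_eq_true_iff, st_eq_true_iff]
      omega

lemma Hq1 (i j : Fin n) :
    restrict (st i) (A1 n)ᶜ = restrict (st j) (A1 n)ᶜ ↔
      (i = j ∨ (i.val ≤ 1 ∧ j.val ≤ 1) ∨ (4 ≤ i.val ∧ 4 ≤ j.val)) := by
  rw [restrict_eq_iff]
  constructor
  · intro h
    have f0 := (st_eq_st_iff i j ⟨0, by omega⟩).mp (h _ ((memA1c _).mpr (by simp)))
    have f1 := (st_eq_st_iff i j ⟨1, by omega⟩).mp (h _ ((memA1c _).mpr (by simp)))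
    rw [st_eq_true_iff, st_eq_true_iff] at f0 f1
    norm_num [Fin.val_mk] at f0 f1
    suffices hs : i.val = j.val ∨ (i.val ≤ 1 ∧ j.val ≤ 1) ∨ (4 ≤ i.val ∧ 4 ≤ j.val) by
      rcases hs with hs | hs
      · exact Or.inl (Fin.ext hs)
      · exact Or.inr hs
    omega
  · intro h a ha
    have ha' : a.val < 2 := (memA1c _).mp ha
    rcases h with rfl | hcls
    · rfl
    · rw [st_eq_st_iff, st_eq_true_iff, st_eq_true_iff]
      omega

lemma Hpi2 (i j : Fin n) :
    restrict (st i) (A2 n) = restrict (st j) (A2 n) ↔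
      (i = j ∨ (4 ≤ i.val ∧ 4 ≤ j.val)) := by
  rw [restrict_eq_iff]
  constructor
  · intro h
    have f0 := (st_eq_st_iff i j ⟨0, by omega⟩).mp (h _ ((memA2 _).mpr (by simp)))
    have f1 := (st_eq_st_iff i j ⟨1, by omega⟩).mp (h _ ((memA2 _).mpr (by simp)))
    have f2 := (st_eq_st_iff i j ⟨2, by omega⟩).mp (h _ ((memA2 _).mpr (by simp)))
    rw [st_eq_true_iff, st_eq_true_iff] at f0 f1 f2
    norm_num [Fin.val_mk] at f0 f1 f2
    suffices hs : i.val = j.val ∨ (4 ≤ i.val ∧ 4 ≤ j.val) by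
      rcases hs with hs | hs
      · exact Or.inl (Fin.ext hs)
      · exact Or.inr hs
    omega
  · intro h a ha
    have ha' : a.val ≤ 2 := (memA2 _).mp ha
    rcases h with rfl | hcls
    · rfl
    · rw [st_eq_st_iff, st_eq_true_iff, st_eq_true_iff]
      omega

lemma Hq2 (i j : Fin n) :
    restrict (st i) (A2 n)ᶜ = restrict (st j) (A2 n)ᶜ ↔
      (i = j ∨ (i.val ≤ 1 ∧ j.val ≤ 1) ∨ (2 ≤ i.val ∧ i.val ≤ 3 ∧ 2 ≤ j.val ∧ j.val ≤ 3)) := by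
  rw [restrict_eq_iff]
  constructor
  · intro h
    have f3 := (st_eq_st_iff i j ⟨3, by omega⟩).mp (h _ ((memA2c _).mpr (by simp)))
    rw [st_eq_true_iff, st_eq_true_iff] at f3
    norm_num [Fin.val_mk] at f3
    suffices hs : i.val = j.val ∨ (i.val ≤ 1 ∧ j.val ≤ 1) ∨
        (2 ≤ i.val ∧ i.val ≤ 3 ∧ 2 ≤ j.val ∧ j.val ≤ 3) by
      rcases hs with hs | hs
      · exact Or.inl (Fin.ext hs)
      · exact Or.inr hs
    by_cases h4i : 4 ≤ i.val
    · have hii := (st_eq_st_iff i j i).mp (h _ ((memA2c _).mpr (by omega)))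
      rw [st_eq_true_iff, st_eq_true_iff] at hii
      omega
    · by_cases h4j : 4 ≤ j.val
      · have hjj := (st_eq_st_iff i j j).mp (h _ ((memA2c _).mpr (by omega)))
        rw [st_eq_true_iff, st_eq_true_iff] at hjj
        omega
      · omega
  · intro h a ha
    have ha' : 3 ≤ a.val := (memA2c _).mp ha
    rcases h with rfl | hcls
    · rfl
    · rw [st_eq_st_iff, st_eq_true_iff, st_eq_true_iff]
      omega

lemma st_injective : Function.Injective (st (n := n)) := by
  intro i j hij
  have h2 : restrict (st i) (A2 n) = restrict (st j) (A2 n) := by rw [hij]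
  have hq : restrict (st i) (A2 n)ᶜ = restrict (st j) (A2 n)ᶜ := by rw [hij]
  rcases (Hpi2 hn i j).mp h2 with h | h
  · exact h
  · rcases (Hq2 hn i j).mp hq with h' | h' | h'
    · exact h'
    · omega
    · omega

def γn : Fin n → Fin 3 := fun i => if i.val ≤ 1 then 0 else if i.val ≤ 3 then 1 else 2
def blkA : Fin 3 → Bool := ![true, false, true]
def blkB : Fin 3 → Bool := ![true, true, false]

omit hn in
lemma γn_eq0 (i : Fin n) : γn i = 0 ↔ i.val ≤ 1 := by
  unfold γn; split_ifs <;> simp_all [Fin.ext_iff] <;> omega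

omit hn in
lemma γn_eq1 (i : Fin n) : γn i = 1 ↔ (2 ≤ i.val ∧ i.val ≤ 3) := by
  unfold γn; split_ifs <;> simp_all [Fin.ext_iff] <;> omega

omit hn in
lemma γn_eq2 (i : Fin n) : γn i = 2 ↔ 4 ≤ i.val := by
  unfold γn; split_ifs <;> simp_all [Fin.ext_iff] <;> omega

lemma H2cut1 (i j : Fin n) :
    restrict (st i) (A1 n) = restrict (st j) (A1 n) ↔
      (γn i = γn j ∧ (blkA (γn i) = false ∨ i = j)) := by
  rw [Hpi1 hn i j]
  have bf : ∀ g : Fin 3, blkA g = false ↔ g = 1 := by decide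
  constructor
  · rintro (rfl | ⟨hi2, hi3, hj2, hj3⟩)
    · exact ⟨rfl, Or.inr rfl⟩
    · have hgi : γn i = 1 := (γn_eq1 i).mpr ⟨hi2, hi3⟩
      have hgj : γn j = 1 := (γn_eq1 j).mpr ⟨hj2, hj3⟩
      exact ⟨hgi.trans hgj.symm, Or.inl ((bf _).mpr hgi)⟩
  · rintro ⟨hγ, hb | rfl⟩
    · have hgi : γn i = 1 := (bf _).mp hb
      have hgj : γn j = 1 := hγ.symm.trans hgi
      exact Or.inr ⟨((γn_eq1 i).mp hgi).1, ((γn_eq1 i).mp hgi).2,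
        ((γn_eq1 j).mp hgj).1, ((γn_eq1 j).mp hgj).2⟩
    · exact Or.inl rfl

lemma H1cut1 (i j : Fin n) :
    restrict (st i) (A1 n)ᶜ = restrict (st j) (A1 n)ᶜ ↔
      (γn i = γn j ∧ (blkA (γn i) = true ∨ i = j)) := by
  rw [Hq1 hn i j]
  have bt : ∀ g : Fin 3, blkA g = true ↔ (g = 0 ∨ g = 2) := by decide
  constructor
  · rintro (rfl | ⟨hi, hj⟩ | ⟨hi, hj⟩)
    · exact ⟨rfl, Or.inr rfl⟩
    · have hgi : γn i = 0 := (γn_eq0 i).mpr hi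
      have hgj : γn j = 0 := (γn_eq0 j).mpr hj
      exact ⟨hgi.trans hgj.symm, Or.inl ((bt _).mpr (Or.inl hgi))⟩
    · have hgi : γn i = 2 := (γn_eq2 i).mpr hi
      have hgj : γn j = 2 := (γn_eq2 j).mpr hj
      exact ⟨hgi.trans hgj.symm, Or.inl ((bt _).mpr (Or.inr hgi))⟩
  · rintro ⟨hγ, hb | rfl⟩
    · rcases (bt _).mp hb with hgi | hgi
      · exact Or.inr (Or.inl ⟨(γn_eq0 i).mp hgi, (γn_eq0 j).mp (hγ.symm.trans hgi)⟩)
      · exact Or.inr (Or.inr ⟨(γn_eq2 i).mp hgi, (γn_eq2 j).mp (hγ.symm.trans hgi)⟩)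
    · exact Or.inl rfl

lemma H2cut2 (i j : Fin n) :
    restrict (st i) (A2 n) = restrict (st j) (A2 n) ↔
      (γn i = γn j ∧ (blkB (γn i) = false ∨ i = j)) := by
  rw [Hpi2 hn i j]
  have bf : ∀ g : Fin 3, blkB g = false ↔ g = 2 := by decide
  constructor
  · rintro (rfl | ⟨hi, hj⟩)
    · exact ⟨rfl, Or.inr rfl⟩
    · have hgi : γn i = 2 := (γn_eq2 i).mpr hi
      have hgj : γn j = 2 := (γn_eq2 j).mpr hj
      exact ⟨hgi.trans hgj.symm, Or.inl ((bf _).mpr hgi)⟩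
  · rintro ⟨hγ, hb | rfl⟩
    · have hgi : γn i = 2 := (bf _).mp hb
      exact Or.inr ⟨(γn_eq2 i).mp hgi, (γn_eq2 j).mp (hγ.symm.trans hgi)⟩
    · exact Or.inl rfl

lemma H1cut2 (i j : Fin n) :
    restrict (st i) (A2 n)ᶜ = restrict (st j) (A2 n)ᶜ ↔
      (γn i = γn j ∧ (blkB (γn i) = true ∨ i = j)) := by
  rw [Hq2 hn i j]
  have bt : ∀ g : Fin 3, blkB g = true ↔ (g = 0 ∨ g = 1) := by decide
  constructor
  · rintro (rfl | ⟨hi, hj⟩ | ⟨hi2, hi3, hj2, hj3⟩)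
    · exact ⟨rfl, Or.inr rfl⟩
    · have hgi : γn i = 0 := (γn_eq0 i).mpr hi
      have hgj : γn j = 0 := (γn_eq0 j).mpr hj
      exact ⟨hgi.trans hgj.symm, Or.inl ((bt _).mpr (Or.inl hgi))⟩
    · have hgi : γn i = 1 := (γn_eq1 i).mpr ⟨hi2, hi3⟩
      have hgj : γn j = 1 := (γn_eq1 j).mpr ⟨hj2, hj3⟩
      exact ⟨hgi.trans hgj.symm, Or.inl ((bt _).mpr (Or.inr hgi))⟩
  · rintro ⟨hγ, hb | rfl⟩
    · rcases (bt _).mp hb with hgi | hgi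
      · exact Or.inr (Or.inl ⟨(γn_eq0 i).mp hgi, (γn_eq0 j).mp (hγ.symm.trans hgi)⟩)
      · have h1 := (γn_eq1 i).mp hgi
        have h2 := (γn_eq1 j).mp (hγ.symm.trans hgi)
        exact Or.inr (Or.inr ⟨h1.1, h1.2, h2.1, h2.2⟩)
    · exact Or.inl rfl

end Concrete

section Final
variable {n : ℕ}

lemma rho_eq_Mabs (hn : 4 ≤ n) (c : (Fin n → Bool) → ℂ) (A : Finset (Fin n)) :
    rho (Finset.univ.image st) c A
      = Mabs (fun i : Fin n => restrict (st i) A) (fun i => restrict (st i) Aᶜ)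
          (fun i => c (st i)) := by
  funext x y
  unfold rho Mabs
  rw [Finset.sum_image (fun a _ b _ h => st_injective hn h)]
  exact Finset.sum_congr rfl fun i _ =>
    Finset.sum_image (fun a _ b _ h => st_injective hn h)

/-- for every `n ≥ 4` there are a set `R` of `n` basis states and two
admissible subsystems `A₁ ≁_R A₂` whose reduced density matrices nevertheless have equal
spectra for every normalized pure state supported on `R`. -/
theorem exists_not_sim_with_equal_spectra :
    ∀ n : ℕ, 4 ≤ n →
      ∃ R : Finset (Fin n → Bool), R.card = n ∧
        ∃ A₁ A₂ : Finset (Fin n),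
          A₁.Nonempty ∧ A₂.Nonempty ∧ A₁ ≠ Finset.univ ∧ A₂ ≠ Finset.univ ∧
          ¬ simR R A₁ A₂ ∧
          ∀ c : (Fin n → Bool) → ℂ, (∑ ψ ∈ R, ‖c ψ‖ ^ 2 = 1) →
            spectrum ℂ (rho R c A₁) = spectrum ℂ (rho R c A₂) := by
  intro n hn
  set R : Finset (Fin n → Bool) := Finset.univ.image st with hRdef
  have i0 : Fin n := ⟨0, by omega⟩
  refine ⟨R, ?_, A1 n, A2 n, ?_, ?_, ?_, ?_, ?_, ?_⟩
  · rw [hRdef, Finset.card_image_of_injective _ (st_injective hn), Finset.card_univ,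
      Fintype.card_fin]
  · exact ⟨⟨2, by omega⟩, (memA1 _).mpr (by norm_num [Fin.val_mk])⟩
  · exact ⟨⟨0, by omega⟩, (memA2 _).mpr (by norm_num [Fin.val_mk])⟩
  · intro h
    have := (memA1 (⟨0, by omega⟩ : Fin n)).mp (h ▸ Finset.mem_univ _)
    norm_num [Fin.val_mk] at this
  · intro h
    have := (memA2 (⟨3, by omega⟩ : Fin n)).mp (h ▸ Finset.mem_univ _)
    norm_num [Fin.val_mk] at this
  · -- ¬ simR
    intro hsim
    have hmem : classes R (A1 n) ∈
        ({classes R (A2 n), classes R (A2 n)ᶜ} : Set (Set (Set (Fin n → Bool)))) := by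
      rw [← hsim]; left; rfl
    have hmemR : ∀ i : Fin n, st i ∈ R := fun i =>
      Finset.mem_image_of_mem st (Finset.mem_univ i)
    rcases hmem with h | h
    · -- classes A1 = classes A2 : use the class {s₂,s₃}
      set i2 : Fin n := ⟨2, by omega⟩ with hi2
      set i3 : Fin n := ⟨3, by omega⟩ with hi3
      have hC : {φ | φ ∈ R ∧ restrict φ (A1 n) = restrict (st i2) (A1 n)}
          ∈ classes R (A1 n) := ⟨st i2, hmemR i2, rfl⟩
      rw [h] at hC
      obtain ⟨ψ, hψR, hCeq⟩ := hC
      have h2C : st i2 ∈ {φ | φ ∈ R ∧ restrict φ (A2 n) = restrict ψ (A2 n)} := by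
        rw [← hCeq]; exact ⟨hmemR i2, rfl⟩
      have h3C : st i3 ∈ {φ | φ ∈ R ∧ restrict φ (A2 n) = restrict ψ (A2 n)} := by
        rw [← hCeq]
        refine ⟨hmemR i3, ?_⟩
        rw [Hpi1 hn i3 i2]
        right
        norm_num [hi2, hi3, Fin.val_mk]
      have h23 : restrict (st i2) (A2 n) = restrict (st i3) (A2 n) :=
        h2C.2.trans h3C.2.symm
      rcases (Hpi2 hn i2 i3).mp h23 with he | he
      · rw [Fin.ext_iff] at he
        norm_num [hi2, hi3, Fin.val_mk] at he
      · norm_num [hi2, hi3, Fin.val_mk] at he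
    · -- classes A1 = classes A2ᶜ : use the class {s₀,s₁}
      set j0 : Fin n := ⟨0, by omega⟩ with hj0
      set j1 : Fin n := ⟨1, by omega⟩ with hj1
      have hC : {φ | φ ∈ R ∧ restrict φ (A2 n)ᶜ = restrict (st j0) (A2 n)ᶜ}
          ∈ classes R (A2 n)ᶜ := ⟨st j0, hmemR j0, rfl⟩
      rw [← h] at hC
      obtain ⟨ψ, hψR, hCeq⟩ := hC
      have h0C : st j0 ∈ {φ | φ ∈ R ∧ restrict φ (A1 n) = restrict ψ (A1 n)} := by
        rw [← hCeq]; exact ⟨hmemR j0, rfl⟩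
      have h1C : st j1 ∈ {φ | φ ∈ R ∧ restrict φ (A1 n) = restrict ψ (A1 n)} := by
        rw [← hCeq]
        refine ⟨hmemR j1, ?_⟩
        rw [Hq2 hn j1 j0]
        right; left
        norm_num [hj0, hj1, Fin.val_mk]
      have h01 : restrict (st j0) (A1 n) = restrict (st j1) (A1 n) :=
        h0C.2.trans h1C.2.symm
      rcases (Hpi1 hn j0 j1).mp h01 with he | he
      · rw [Fin.ext_iff] at he
        norm_num [hj0, hj1, Fin.val_mk] at he
      · norm_num [hj0, hj1, Fin.val_mk] at he
  · -- equal spectra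
    intro c _
    set d : Fin n → ℂ := fun i => c (st i) with hd
    set k0 : Fin n := ⟨0, by omega⟩ with hk0
    set k1 : Fin n := ⟨1, by omega⟩ with hk1
    have hne01 : k0 ≠ k1 := by
      intro h; rw [Fin.ext_iff] at h; norm_num [hk0, hk1, Fin.val_mk] at h
    have hγ0 : γn k0 = 0 := (γn_eq0 k0).mpr (by norm_num [hk0, Fin.val_mk])
    have hγ1 : γn k1 = 0 := (γn_eq0 k1).mpr (by norm_num [hk1, Fin.val_mk])
    have hγ01 : γn k0 = γn k1 := hγ0.trans hγ1.symm
    have hblkA0 : blkA (γn k0) = true := by rw [hγ0]; rfl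
    have hblkB0 : blkB (γn k0) = true := by rw [hγ0]; rfl
    rw [rho_eq_Mabs hn c (A1 n), rho_eq_Mabs hn c (A2 n)]
    rw [spec_Mabs (γ := γn) (blk := blkA) (H1cut1 hn) (H2cut1 hn) k0 k1 hne01 hγ01 hblkA0]
    rw [spec_Mabs (γ := γn) (blk := blkB) (H1cut2 hn) (H2cut2 hn) k0 k1 hne01 hγ01 hblkB0]

end Final
end

section
/- Let 𝕋 be a generator set of R and let A₁, A₂ ⊆ Fin n be arbitrary subsets. Then the unordered pairs of operator sets coincide, {O_{A₁}, O_{A₁ᶜ}} = {O_{A₂}, O_{A₂ᶜ}}, if and only if A₁ ∼_R A₂. -/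
open Finset

/-- `G(𝕋)`: the set of all finite compositions of elements of `T`
(the empty composition being the identity). -/
def Gset {α : Type*} (T : Set (α → α)) : Set (α → α) :=
  {P | ∃ l : List (α → α), (∀ f ∈ l, f ∈ T) ∧ P = l.foldr (· ∘ ·) id}

/-- `𝕋` is a generator set of `R`: it contains the identity, finite compositions of its
elements commute, it acts transitively on `R`, and it is locally invariant. -/
def IsGenSet {n : ℕ} (R : Finset (Fin n → Bool))
    (T : Set ({ψ // ψ ∈ R} → {ψ // ψ ∈ R})) : Prop :=
  id ∈ T ∧
  (∀ P ∈ Gset T, ∀ Q ∈ Gset T, P ∘ Q = Q ∘ P) ∧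
  (∀ ψ φ : {ψ // ψ ∈ R}, ∃ P ∈ Gset T, P ψ = φ) ∧
  (∀ P ∈ T, ∀ A : Finset (Fin n), A.Nonempty →
    (∃ ψ : {ψ // ψ ∈ R}, restrict (↑(P ψ)) A = restrict (↑ψ) A) →
    ∀ φ : {ψ // ψ ∈ R}, restrict (↑(P φ)) A = restrict (↑φ) A)

/-- The operator set `O_A` of a subsystem `A` (for `A = ∅` this is all of `G(𝕋)`). -/
def opSet {n : ℕ} (R : Finset (Fin n → Bool))
    (T : Set ({ψ // ψ ∈ R} → {ψ // ψ ∈ R})) (A : Finset (Fin n)) :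
    Set ({ψ // ψ ∈ R} → {ψ // ψ ∈ R}) :=
  {P | P ∈ Gset T ∧ ∀ ψ : {ψ // ψ ∈ R}, restrict (↑(P ψ)) A = restrict (↑ψ) A}

/-!
Both sides reduce to comparing the relations `∼_A` on `R`. For the partitions this is immediate.
For the operator sets, local invariance on a singleton `{i}` shows that every generator either
fixes or flips coordinate `i` throughout `R`, so every `P ∈ G(𝕋)` preserves agreement on any `A`.
Combined with commutativity and transitivity this makes local invariance hold on all of `G(𝕋)`:
if `P` fixes `ψ` on `A` and `Q ψ = φ`, then `P φ = Q (P ψ)` agrees with `Q ψ = φ` on `A`.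
Hence `O_A ⊆ O_B` iff `ψ ∼_A φ → ψ ∼_B φ`, using for `⇒` an operator taking `ψ` to `φ`.
-/

section

variable {n : ℕ} {R : Finset (Fin n → Bool)}

lemma restrict_eq_restrict_iff {φ ψ : Fin n → Bool} {A : Finset (Fin n)} :
    restrict φ A = restrict ψ A ↔ ∀ i ∈ A, φ i = ψ i :=
  ⟨fun h i hi => congrFun h ⟨i, hi⟩, fun h => funext fun a => h a.1 a.2⟩

lemma restrict_eq_of_classes_subset {A B : Finset (Fin n)} (h : classes R A ⊆ classes R B)
    {φ ψ : Fin n → Bool} (hφ : φ ∈ R) (hψ : ψ ∈ R) (hA : restrict φ A = restrict ψ A) :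
    restrict φ B = restrict ψ B := by
  obtain ⟨χ, -, hχ⟩ := h ⟨ψ, hψ, rfl⟩
  have hφχ : φ ∈ {φ | φ ∈ R ∧ restrict φ B = restrict χ B} := hχ ▸ ⟨hφ, hA⟩
  have hψχ : ψ ∈ {φ | φ ∈ R ∧ restrict φ B = restrict χ B} := hχ ▸ ⟨hψ, rfl⟩
  rw [hφχ.2, hψχ.2]

lemma classes_eq_iff {A B : Finset (Fin n)} :
    classes R A = classes R B ↔
      ∀ φ ∈ R, ∀ ψ ∈ R, (restrict φ A = restrict ψ A ↔ restrict φ B = restrict ψ B) := by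
  refine ⟨fun h φ hφ ψ hψ => ⟨restrict_eq_of_classes_subset h.subset hφ hψ,
    restrict_eq_of_classes_subset h.symm.subset hφ hψ⟩, fun h => ?_⟩
  ext C
  refine exists_congr fun ψ => and_congr_right fun hψ => ?_
  suffices {φ | φ ∈ R ∧ restrict φ A = restrict ψ A} = {φ | φ ∈ R ∧ restrict φ B = restrict ψ B}
    by rw [this]
  ext φ
  exact and_congr_right fun hφ => h φ hφ ψ hψ

namespace IsGenSet

variable {T : Set ({ψ // ψ ∈ R} → {ψ // ψ ∈ R})}

lemma coord_eq_or_eq_not (hT : IsGenSet R T) {f : {ψ // ψ ∈ R} → {ψ // ψ ∈ R}} (hf : f ∈ T)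
    (i : Fin n) : (∀ x, (f x).1 i = x.1 i) ∨ ∀ x, (f x).1 i = !x.1 i := by
  have restrict_singleton {x : {ψ // ψ ∈ R}} :
      restrict (f x).1 {i} = restrict x.1 {i} ↔ (f x).1 i = x.1 i := by
    simp only [restrict_eq_restrict_iff, mem_singleton, forall_eq]
  by_cases hfix : ∃ x, restrict (f x).1 {i} = restrict x.1 {i}
  · exact .inl fun x => restrict_singleton.mp (hT.2.2.2 f hf {i} (singleton_nonempty i) hfix x)
  · exact .inr fun x => Bool.eq_not_of_ne fun h => hfix ⟨x, restrict_singleton.mpr h⟩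

lemma coord_eq_of_mem_Gset (hT : IsGenSet R T) {P : {ψ // ψ ∈ R} → {ψ // ψ ∈ R}}
    (hP : P ∈ Gset T) {i : Fin n} {x y : {ψ // ψ ∈ R}} (hxy : x.1 i = y.1 i) :
    (P x).1 i = (P y).1 i := by
  obtain ⟨l, hl, rfl⟩ := hP
  induction l with
  | nil => exact hxy
  | cons f l ih =>
    have ih := ih fun g hg => hl g (List.mem_cons_of_mem _ hg)
    rcases hT.coord_eq_or_eq_not (hl f List.mem_cons_self) i with hfix | hflip
    · simp only [List.foldr_cons, Function.comp_apply, hfix, ih]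
    · simp only [List.foldr_cons, Function.comp_apply, hflip, ih]

lemma restrict_apply_eq_of_mem_Gset (hT : IsGenSet R T) {P : {ψ // ψ ∈ R} → {ψ // ψ ∈ R}}
    (hP : P ∈ Gset T) {A : Finset (Fin n)} {ψ : {ψ // ψ ∈ R}}
    (hψ : restrict (P ψ).1 A = restrict ψ.1 A) (φ : {ψ // ψ ∈ R}) :
    restrict (P φ).1 A = restrict φ.1 A := by
  obtain ⟨Q, hQ, rfl⟩ := hT.2.2.1 ψ φ
  have hcomm : P (Q ψ) = Q (P ψ) := congrFun (hT.2.1 P hP Q hQ) ψ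
  rw [restrict_eq_restrict_iff] at hψ ⊢
  intro i hi
  rw [hcomm]
  exact hT.coord_eq_of_mem_Gset hQ (hψ i hi)

lemma opSet_subset_iff (hT : IsGenSet R T) {A B : Finset (Fin n)} :
    opSet R T A ⊆ opSet R T B ↔
      ∀ x y : {ψ // ψ ∈ R}, restrict x.1 A = restrict y.1 A → restrict x.1 B = restrict y.1 B := by
  constructor
  · intro h x y hxy
    obtain ⟨P, hP, rfl⟩ := hT.2.2.1 x y
    have hPA : P ∈ opSet R T A := ⟨hP, hT.restrict_apply_eq_of_mem_Gset hP hxy.symm⟩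
    exact ((h hPA).2 x).symm
  · exact fun h P hP => ⟨hP.1, fun ψ => h _ _ (hP.2 ψ)⟩

lemma opSet_eq_iff_classes_eq (hT : IsGenSet R T) {A B : Finset (Fin n)} :
    opSet R T A = opSet R T B ↔ classes R A = classes R B := by
  rw [classes_eq_iff, Set.Subset.antisymm_iff, hT.opSet_subset_iff, hT.opSet_subset_iff]
  exact ⟨fun ⟨hAB, hBA⟩ φ hφ ψ hψ => ⟨hAB ⟨φ, hφ⟩ ⟨ψ, hψ⟩, hBA ⟨φ, hφ⟩ ⟨ψ, hψ⟩⟩,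
    fun h => ⟨fun x y => (h x.1 x.2 y.1 y.2).mp, fun x y => (h x.1 x.2 y.1 y.2).mpr⟩⟩

end IsGenSet

end

theorem opSet_pair_eq_iff_simR_general {n : ℕ} (R : Finset (Fin n → Bool))
    (T : Set ({ψ // ψ ∈ R} → {ψ // ψ ∈ R})) (hT : IsGenSet R T)
    (A₁ A₂ : Finset (Fin n)) :
    ({opSet R T A₁, opSet R T A₁ᶜ} : Set (Set ({ψ // ψ ∈ R} → {ψ // ψ ∈ R}))) =
        {opSet R T A₂, opSet R T A₂ᶜ} ↔
      simR R A₁ A₂ := by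
  simp only [simR, Set.pair_eq_pair_iff, hT.opSet_eq_iff_classes_eq]

/-- the unordered pairs of operator sets coincide iff `A₁ ∼_R A₂`. -/
theorem opSet_pair_eq_iff_simR {n : ℕ} (R : Finset (Fin n → Bool)) (hR : R.Nonempty)
    (T : Set ({ψ // ψ ∈ R} → {ψ // ψ ∈ R})) (hT : IsGenSet R T)
    (A₁ A₂ : Finset (Fin n)) :
    ({opSet R T A₁, opSet R T A₁ᶜ} : Set (Set ({ψ // ψ ∈ R} → {ψ // ψ ∈ R}))) =
        {opSet R T A₂, opSet R T A₂ᶜ} ↔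
      simR R A₁ A₂ :=
  opSet_pair_eq_iff_simR_general R T hT A₁ A₂
end

section
/- Let 𝕋 be a generator set of R, let A ⊆ Fin n be nonempty, and let ψ ∈ R. Then the equivalence class of ψ under ∼_A equals the orbit of ψ under the operator set O_A, i.e. {φ ∈ R | φ|_A = ψ|_A} = {P ψ | P ∈ O_A}. -/
open Finset

/-!
Local invariance applied to a single coordinate `a` says that a generator either fixes the
`a`-th bit of every state or flips it in every state. Hence each generator, and so each
element of `G(𝕋)`, acts on states as `xor` with a fixed mask. If `P ψ = φ` with
`φ|_A = ψ|_A` (such `P` exists by transitivity), the mask of `P` vanishes on `A`, so `P`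
fixes the `A`-part of every state, i.e. `P ∈ O_A`.
-/

theorem Gset_subset {α : Type*} {T S : Set (α → α)} (hTS : T ⊆ S) (hid : id ∈ S)
    (hcomp : ∀ f ∈ S, ∀ g ∈ S, f ∘ g ∈ S) : Gset T ⊆ S := by
  rintro P ⟨l, hl, rfl⟩
  induction l with
  | nil => exact hid
  | cons f t ih =>
    exact hcomp f (hTS (hl f List.mem_cons_self)) _
      (ih fun g hg => hl g (List.mem_cons_of_mem f hg))

theorem Bool.exists_xor_of_eq_of_exists_eq {X : Type*} {u v : X → Bool}
    (h : (∃ x, u x = v x) → ∀ x, u x = v x) : ∃ b : Bool, ∀ x, u x = xor b (v x) := by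
  by_cases hex : ∃ x, u x = v x
  · exact ⟨false, fun x => by simpa using h hex x⟩
  · push Not at hex
    exact ⟨true, fun x => by simpa using Bool.eq_not_of_ne (hex x)⟩

theorem restrict_singleton_eq_iff {n : ℕ} {ψ φ : Fin n → Bool} {a : Fin n} :
    restrict ψ {a} = restrict φ {a} ↔ ψ a = φ a := by
  refine ⟨fun h => congrFun h ⟨a, mem_singleton_self a⟩, fun h => ?_⟩
  funext ⟨x, hx⟩
  obtain rfl := mem_singleton.mp hx
  exact h

section XorShift

variable {n : ℕ} {R : Finset (Fin n → Bool)}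

def IsXorShift (P : {ψ // ψ ∈ R} → {ψ // ψ ∈ R}) : Prop :=
  ∃ m : Fin n → Bool, ∀ χ a, (P χ : Fin n → Bool) a = xor (m a) (χ.1 a)

theorem isXorShift_id : IsXorShift (id : {ψ // ψ ∈ R} → {ψ // ψ ∈ R}) :=
  ⟨fun _ => false, fun _ _ => by simp⟩

theorem IsXorShift.comp {P Q : {ψ // ψ ∈ R} → {ψ // ψ ∈ R}} (hP : IsXorShift P)
    (hQ : IsXorShift Q) : IsXorShift (P ∘ Q) := by
  obtain ⟨m, hm⟩ := hP
  obtain ⟨m', hm'⟩ := hQ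
  exact ⟨fun a => xor (m a) (m' a), fun χ a => by simp [hm, hm']⟩

theorem isXorShift_of_forall_singleton {P : {ψ // ψ ∈ R} → {ψ // ψ ∈ R}}
    (hP : ∀ a : Fin n, (∃ ψ, restrict (↑(P ψ)) {a} = restrict (↑ψ) {a}) →
      ∀ φ, restrict (↑(P φ)) {a} = restrict (↑φ) {a}) :
    IsXorShift P := by
  simp only [restrict_singleton_eq_iff] at hP
  choose m hm using fun a => Bool.exists_xor_of_eq_of_exists_eq (hP a)
  exact ⟨m, fun χ a => hm a χ⟩

theorem IsXorShift.restrict_eq {P : {ψ // ψ ∈ R} → {ψ // ψ ∈ R}} (hP : IsXorShift P)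
    {A : Finset (Fin n)} {ψ : {ψ // ψ ∈ R}} (hψ : restrict (↑(P ψ)) A = restrict (↑ψ) A)
    (φ : {ψ // ψ ∈ R}) : restrict (↑(P φ)) A = restrict (↑φ) A := by
  obtain ⟨m, hm⟩ := hP
  funext ⟨a, ha⟩
  have hma : m a = false := by
    have hψa := congrFun hψ ⟨a, ha⟩
    simp only [_root_.restrict, hm] at hψa
    cases hb : m a <;> simp_all
  simp [_root_.restrict, hm, hma]

theorem IsGenSet.isXorShift {T : Set ({ψ // ψ ∈ R} → {ψ // ψ ∈ R})} (hT : IsGenSet R T)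
    {P : {ψ // ψ ∈ R} → {ψ // ψ ∈ R}} (hP : P ∈ Gset T) : IsXorShift P :=
  Gset_subset (S := {P | IsXorShift P})
    (fun f hf => isXorShift_of_forall_singleton fun a =>
      hT.2.2.2 f hf {a} (singleton_nonempty a))
    isXorShift_id (fun _ hf _ hg => IsXorShift.comp hf hg) hP

end XorShift

theorem class_eq_orbit_general {n : ℕ} (R : Finset (Fin n → Bool))
    (T : Set ({ψ // ψ ∈ R} → {ψ // ψ ∈ R})) (hT : IsGenSet R T)
    (A : Finset (Fin n)) (ψ : {ψ // ψ ∈ R}) :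
    {φ : {ψ // ψ ∈ R} | restrict (↑φ) A = restrict (↑ψ) A} =
      {φ : {ψ // ψ ∈ R} | ∃ P ∈ opSet R T A, P ψ = φ} := by
  ext φ
  constructor
  · intro hφ
    obtain ⟨P, hP, rfl⟩ := hT.2.2.1 ψ φ
    exact ⟨P, ⟨hP, (hT.isXorShift hP).restrict_eq hφ⟩, rfl⟩
  · rintro ⟨P, ⟨-, hPA⟩, rfl⟩
    exact hPA ψ

/-- the equivalence class of `ψ` under `∼_A` equals the orbit of `ψ`
under the operator set `O_A`. -/
theorem class_eq_orbit {n : ℕ} (R : Finset (Fin n → Bool)) (hR : R.Nonempty)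
    (T : Set ({ψ // ψ ∈ R} → {ψ // ψ ∈ R})) (hT : IsGenSet R T)
    (A : Finset (Fin n)) (hA : A.Nonempty) (ψ : {ψ // ψ ∈ R}) :
    {φ : {ψ // ψ ∈ R} | restrict (↑φ) A = restrict (↑ψ) A} =
      {φ : {ψ // ψ ∈ R} | ∃ P ∈ opSet R T A, P ψ = φ} :=
  class_eq_orbit_general R T hT A ψ
end

section
/- Let H = (V, E) be a hypergraph, where V is a finite type and E is a finite set of finite subsets of V. A weight w : E → ZMod 2 is a parity weight if and only if for every constraint C ⊆ E, the number of edges e ∈ C with w(e) = 0 is even; equivalently, if and only if for every constraint C, Σ_{e∈C} (w(e) + 1) = 0 in ZMod 2. -/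
open Finset Matrix

/-!
Identify `w` with the vector `w + 1` over `ZMod 2` and let `M` be the edge–vertex incidence
matrix. Then `w` is a parity weight iff `w + 1` lies in the column space of `M`, which over a
field is the annihilator of the left kernel of `M`. Vectors over `ZMod 2` are indicators of sets
of edges, and the indicator of `C` lies in the left kernel exactly when `C` is a constraint. So
`w` is a parity weight iff `∑_{e ∈ C} (w e + 1) = 0` for every constraint `C`, and this sum
counts the edges of `C` of weight `0`.
-/

/-- A weight `w` of the edge set `E` is a parity weight if it arises from a logical weight
`f` of the vertices via `w(e) + 1 = Σ_{v ∈ e} f(v)` in `ZMod 2`. -/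
def IsParityWeight {V : Type*} (E : Finset (Finset V)) (w : {e // e ∈ E} → ZMod 2) : Prop :=
  ∃ f : V → ZMod 2, ∀ e : {e // e ∈ E}, w e + 1 = ∑ v ∈ e.1, f v

/-- A constraint of the hypergraph `(V, E)`: a set of edges such that every vertex is
contained in an even number of its edges. -/
def IsConstraint {V : Type*} [DecidableEq V] (E : Finset (Finset V))
    (C : Finset {e // e ∈ E}) : Prop :=
  ∀ v : V, Even ((C.filter (fun e => v ∈ e.1)).card)

theorem Matrix.exists_mulVec_eq_iff {K m n : Type*} [Field K] [Fintype m] [Fintype n]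
    [DecidableEq m] (M : Matrix m n K) (g : m → K) :
    (∃ f, M *ᵥ f = g) ↔ ∀ x, x ᵥ* M = 0 → x ⬝ᵥ g = 0 := by
  have hdual : ∀ x : m → K,
      dotProductEquiv K m x ∈ (LinearMap.range M.mulVecLin).dualAnnihilator ↔ x ᵥ* M = 0 := by
    intro x
    simp [Submodule.mem_dualAnnihilator, dotProduct_mulVec, dotProduct_eq_zero_iff]
  -- A subspace is the common kernel of the functionals vanishing on it, and these are the
  -- maps `x ⬝ᵥ ·` with `x ᵥ* M = 0`.
  change g ∈ LinearMap.range M.mulVecLin ↔ _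
  rw [← Subspace.dualAnnihilator_dualCoannihilator_eq (W := LinearMap.range M.mulVecLin),
    Submodule.mem_dualCoannihilator, (dotProductEquiv K m).surjective.forall]
  simp only [hdual, dotProductEquiv_apply_apply]

theorem Matrix.indicator_one_dotProduct {R ι : Type*} [NonAssocSemiring R] [Fintype ι]
    (C : Finset ι) (g : ι → R) : (C : Set ι).indicator 1 ⬝ᵥ g = ∑ i ∈ C, g i := by
  classical
  simp [dotProduct, Set.indicator_apply, Finset.sum_ite_mem]

theorem ZMod.indicator_support_eq {ι : Type*} (x : ι → ZMod 2) :
    (Function.support x).indicator 1 = x := by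
  funext i
  have h : ∀ a : ZMod 2, (if a ≠ 0 then 1 else 0) = a := by decide
  classical
  simp only [Set.indicator_apply, Function.mem_support, Pi.one_apply]
  convert h (x i)

theorem ZMod.forall_fun_iff_forall_indicator {ι : Type*} [Fintype ι]
    {P : (ι → ZMod 2) → Prop} :
    (∀ x, P x) ↔ ∀ C : Finset ι, P ((C : Set ι).indicator 1) := by
  classical
  refine ⟨fun h C => h _, fun h x => ?_⟩
  simpa [ZMod.indicator_support_eq] using h (Function.support x).toFinset

theorem ZMod.add_one_eq_ite_eq_zero (a : ZMod 2) : a + 1 = if a = 0 then 1 else 0 := by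
  fin_cases a <;> decide

theorem ZMod.sum_add_one_eq_card_filter {ι : Type*} (C : Finset ι) (w : ι → ZMod 2) :
    ∑ i ∈ C, (w i + 1) = #(C.filter (w · = 0)) := by
  simp only [ZMod.add_one_eq_ite_eq_zero, Finset.sum_boole]

section Hypergraph

variable {V : Type*} [DecidableEq V]

def incidenceMatrix (R : Type*) [Zero R] [One R] (E : Finset (Finset V)) :
    Matrix {e // e ∈ E} V R :=
  fun e v => if v ∈ e.1 then 1 else 0

theorem incidenceMatrix_mulVec_apply {R : Type*} [NonAssocSemiring R] [Fintype V]
    (E : Finset (Finset V)) (f : V → R) (e : {e // e ∈ E}) :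
    (incidenceMatrix R E *ᵥ f) e = ∑ v ∈ e.1, f v := by
  simp [incidenceMatrix, mulVec, dotProduct, Finset.sum_ite_mem]

theorem indicator_vecMul_incidenceMatrix_apply {R : Type*} [NonAssocSemiring R]
    (E : Finset (Finset V)) (C : Finset {e // e ∈ E}) (v : V) :
    ((C : Set {e // e ∈ E}).indicator 1 ᵥ* incidenceMatrix R E) v =
      #(C.filter (v ∈ ·.1)) := by
  rw [vecMul, indicator_one_dotProduct]
  simp [incidenceMatrix, Finset.sum_boole]

theorem isParityWeight_iff_exists_mulVec [Fintype V] (E : Finset (Finset V))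
    (w : {e // e ∈ E} → ZMod 2) :
    IsParityWeight E w ↔ ∃ f, incidenceMatrix (ZMod 2) E *ᵥ f = w + 1 := by
  simp only [IsParityWeight, funext_iff, incidenceMatrix_mulVec_apply, Pi.add_apply,
    Pi.one_apply]
  exact exists_congr fun f => forall_congr' fun e => eq_comm

theorem isConstraint_iff_indicator_vecMul_eq_zero (E : Finset (Finset V))
    (C : Finset {e // e ∈ E}) :
    IsConstraint E C ↔
      (C : Set {e // e ∈ E}).indicator 1 ᵥ* incidenceMatrix (ZMod 2) E = 0 := by
  simp only [IsConstraint, funext_iff, indicator_vecMul_incidenceMatrix_apply, Pi.zero_apply,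
    ZMod.natCast_eq_zero_iff_even]

end Hypergraph

/-- `w` is a parity weight iff for every constraint `C` the number of edges
`e ∈ C` with `w(e) = 0` is even; equivalently, iff `Σ_{e ∈ C} (w(e) + 1) = 0` for every
constraint `C`. -/
theorem parityWeight_iff_constraints {V : Type*} [Fintype V] [DecidableEq V]
    (E : Finset (Finset V)) (w : {e // e ∈ E} → ZMod 2) :
    (IsParityWeight E w ↔
      ∀ C : Finset {e // e ∈ E}, IsConstraint E C →
        Even ((C.filter (fun e => w e = 0)).card)) ∧
    (IsParityWeight E w ↔
      ∀ C : Finset {e // e ∈ E}, IsConstraint E C → ∑ e ∈ C, (w e + 1) = 0) := by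
  have hsum : IsParityWeight E w ↔
      ∀ C : Finset {e // e ∈ E}, IsConstraint E C → ∑ e ∈ C, (w e + 1) = 0 := by
    rw [isParityWeight_iff_exists_mulVec, exists_mulVec_eq_iff,
      ZMod.forall_fun_iff_forall_indicator]
    simp only [isConstraint_iff_indicator_vecMul_eq_zero, indicator_one_dotProduct,
      Pi.add_apply, Pi.one_apply]
  refine ⟨hsum.trans (forall₂_congr fun C _ => ?_), hsum⟩
  rw [ZMod.sum_add_one_eq_card_filter, ZMod.natCast_eq_zero_iff_even]
end

section
/- Let V be a finite set with |V| > 3, let E be the set of all 2-element subsets of V (the complete graph), let Π be the set of parity weights of E, and let v ∈ V with logical line L_v := {e ∈ E | v ∈ e}. Then every subset A ⊆ E \ L_v with |A| > |E \ L_v| − (|V| − 2) satisfies A ∼_Π L_v. -/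
open Finset

/-- The edge set of the complete graph on `V`: all 2-element subsets of `V`. -/
def Edges (V : Type*) [Fintype V] [DecidableEq V] : Finset (Finset V) :=
  Finset.powersetCard 2 (Finset.univ : Finset V)

/-- The set `Π` of parity weights of the complete graph on `V`. -/
def ParityWeights (V : Type*) [Fintype V] [DecidableEq V] :
    Set ({e // e ∈ Edges V} → ZMod 2) :=
  {w | ∃ f : V → ZMod 2, ∀ e : {e // e ∈ Edges V}, w e + 1 = ∑ v ∈ e.1, f v}

/-- The quotient set `Π/∼_A`: equivalence classes of parity weights agreeing on `A`. -/
def classesPi (V : Type*) [Fintype V] [DecidableEq V] (A : Finset {e // e ∈ Edges V}) :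
    Set (Set ({e // e ∈ Edges V} → ZMod 2)) :=
  {C | ∃ w ∈ ParityWeights V,
    C = {w' | w' ∈ ParityWeights V ∧ ∀ e ∈ A, w' e = w e}}

/-- `A ∼_Π B`: the unordered pairs of quotient sets coincide. -/
def simPi (V : Type*) [Fintype V] [DecidableEq V] (A B : Finset {e // e ∈ Edges V}) : Prop :=
  ({classesPi V A, classesPi V Aᶜ} : Set (Set (Set ({e // e ∈ Edges V} → ZMod 2)))) =
    {classesPi V B, classesPi V Bᶜ}

/-- The logical line of a vertex `v`: all edges containing `v`. -/
def logicalLine {V : Type*} [Fintype V] [DecidableEq V] (v : V) :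
    Finset {e // e ∈ Edges V} :=
  Finset.univ.filter (fun e : {e // e ∈ Edges V} => v ∈ e.1)

section Aux

variable {V : Type*} [Fintype V] [DecidableEq V]

lemma edge_mem {x y : V} (h : x ≠ y) : ({x, y} : Finset V) ∈ Edges V := by
  rw [Edges, Finset.mem_powersetCard]
  exact ⟨Finset.subset_univ _, Finset.card_pair h⟩

lemma edge_two (e : {e // e ∈ Edges V}) : ∃ x y : V, x ≠ y ∧ e.1 = {x, y} := by
  have h : e.1.card = 2 := (Finset.mem_powersetCard.mp e.2).2
  obtain ⟨x, y, hxy, h2⟩ := Finset.card_eq_two.mp h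
  exact ⟨x, y, hxy, h2⟩

lemma zmod_key : ∀ a b p q r s : ZMod 2, a + 1 = p + q → b + 1 = r + s →
    (b = a ↔ p + r = q + s) := by decide

lemma agree_edge {w w' : {e // e ∈ Edges V} → ZMod 2} {f f' : V → ZMod 2}
    (hf : ∀ e : {e // e ∈ Edges V}, w e + 1 = ∑ u ∈ e.1, f u)
    (hf' : ∀ e : {e // e ∈ Edges V}, w' e + 1 = ∑ u ∈ e.1, f' u)
    (e : {e // e ∈ Edges V}) {x y : V} (hxy : x ≠ y) (he : e.1 = {x, y}) :
    (w' e = w e ↔ f x + f' x = f y + f' y) := by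
  have h1 := hf e
  have h2 := hf' e
  rw [he, Finset.sum_pair hxy] at h1 h2
  exact zmod_key _ _ _ _ _ _ h1 h2

lemma mem_logicalLine_iff (v : V) (e : {e // e ∈ Edges V}) :
    e ∈ logicalLine v ↔ v ∈ e.1 := by simp [logicalLine]

lemma g_const {v : V} (hV : 3 < Fintype.card V) (A : Finset {e // e ∈ Edges V})
    (hsub : A ⊆ (logicalLine v)ᶜ)
    (hcard : (logicalLine (V := V) v)ᶜ.card - (Fintype.card V - 2) < A.card)
    (g : V → ZMod 2) (hA : ∀ e ∈ A, ∀ x ∈ e.1, ∀ y ∈ e.1, g x = g y)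
    {x y : V} (hx : x ≠ v) (hy : y ≠ v) : g x = g y := by
  by_contra hg
  set W : Finset V := Finset.univ.erase v with hW
  set S := W.filter (fun z => g z = g x) with hS
  set T := W.filter (fun z => ¬ g z = g x) with hT
  have hxS : x ∈ S := by simp [hS, hW, hx]
  have hyT : y ∈ T := by
    rw [hT, Finset.mem_filter]
    exact ⟨Finset.mem_erase.mpr ⟨hy, Finset.mem_univ y⟩, fun h => hg h.symm⟩
  have hst : S.card + T.card = W.card :=
    Finset.card_filter_add_card_filter_not _
  have hWcard : W.card = Fintype.card V - 1 := by
    rw [hW, Finset.card_erase_of_mem (Finset.mem_univ v), Finset.card_univ]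
  have hdisj : ∀ a ∈ S, ∀ b ∈ T, a ≠ b := by
    intro a ha b hb hab
    rw [hS, Finset.mem_filter] at ha
    rw [hT, Finset.mem_filter] at hb
    exact hb.2 (hab ▸ ha.2)
  set CE := (S ×ˢ T).image (fun p : V × V => ({p.1, p.2} : Finset V)) with hCE
  have hCEcard : CE.card = S.card * T.card := by
    rw [hCE, Finset.card_image_of_injOn, Finset.card_product]
    intro p hp q hq hpq
    simp only [Finset.mem_coe, Finset.mem_product] at hp hq
    have hpq' : ({p.1, p.2} : Finset V) = {q.1, q.2} := hpq
    have h1 : p.1 ∈ ({q.1, q.2} : Finset V) := by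
      rw [← hpq']; exact Finset.mem_insert_self _ _
    have h2 : p.2 ∈ ({q.1, q.2} : Finset V) := by
      rw [← hpq']; simp
    have hp1 : p.1 = q.1 := by
      rcases Finset.mem_insert.mp h1 with h | h
      · exact h
      · exact absurd (Finset.mem_singleton.mp h) (hdisj _ hp.1 _ hq.2)
    have hp2 : p.2 = q.2 := by
      rcases Finset.mem_insert.mp h2 with h | h
      · exact absurd h.symm (hdisj _ hq.1 _ hp.2)
      · exact Finset.mem_singleton.mp h
    exact Prod.ext hp1 hp2
  have hCEsub : CE ⊆ ((logicalLine v)ᶜ \ A).image Subtype.val := by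
    intro e0 he0
    rw [hCE, Finset.mem_image] at he0
    obtain ⟨p, hp, rfl⟩ := he0
    rw [Finset.mem_product] at hp
    have hne : p.1 ≠ p.2 := hdisj _ hp.1 _ hp.2
    have hmem : ({p.1, p.2} : Finset V) ∈ Edges V := edge_mem hne
    rw [Finset.mem_image]
    refine ⟨⟨_, hmem⟩, ?_, rfl⟩
    rw [Finset.mem_sdiff, Finset.mem_compl, mem_logicalLine_iff]
    have hp1v : p.1 ≠ v := Finset.ne_of_mem_erase (Finset.mem_filter.mp hp.1).1
    have hp2v : p.2 ≠ v := Finset.ne_of_mem_erase (Finset.mem_filter.mp hp.2).1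
    constructor
    · intro hv
      rcases Finset.mem_insert.mp hv with h | h
      · exact hp1v h.symm
      · exact hp2v (Finset.mem_singleton.mp h).symm
    · intro hmemA
      have := hA _ hmemA p.1 (Finset.mem_insert_self _ _) p.2 (by simp)
      have h1 := (Finset.mem_filter.mp hp.1).2
      have h2 := (Finset.mem_filter.mp hp.2).2
      exact h2 (this ▸ h1)
  have hle : S.card * T.card ≤ ((logicalLine v)ᶜ \ A).card := by
    rw [← hCEcard, ← Finset.card_image_of_injective ((logicalLine v)ᶜ \ A)
      Subtype.val_injective]
    exact Finset.card_le_card hCEsub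
  have hsd : ((logicalLine v)ᶜ \ A).card = (logicalLine (V := V) v)ᶜ.card - A.card :=
    Finset.card_sdiff_of_subset hsub
  have hAle : A.card ≤ (logicalLine (V := V) v)ᶜ.card := Finset.card_le_card hsub
  have hSpos : 1 ≤ S.card := Finset.card_pos.mpr ⟨x, hxS⟩
  have hTpos : 1 ≤ T.card := Finset.card_pos.mpr ⟨y, hyT⟩
  obtain ⟨s', hs'⟩ := Nat.exists_eq_add_of_le hSpos
  obtain ⟨t', ht'⟩ := Nat.exists_eq_add_of_le hTpos
  have hmul : S.card * T.card = 1 + s' + t' + s' * t' := by rw [hs', ht']; ring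
  rw [hsd] at hle
  rw [hWcard] at hst
  omega

lemma classesPi_congr (A B : Finset {e // e ∈ Edges V})
    (h : ∀ w ∈ ParityWeights V, ∀ w' ∈ ParityWeights V,
      ((∀ e ∈ A, w' e = w e) ↔ (∀ e ∈ B, w' e = w e))) :
    classesPi V A = classesPi V B := by
  ext C
  constructor
  · rintro ⟨w, hw, rfl⟩
    refine ⟨w, hw, ?_⟩
    ext w'
    simp only [Set.mem_setOf_eq]
    exact and_congr_right fun hw' => h w hw w' hw'
  · rintro ⟨w, hw, rfl⟩
    refine ⟨w, hw, ?_⟩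
    ext w'
    simp only [Set.mem_setOf_eq]
    exact and_congr_right fun hw' => (h w hw w' hw').symm

end Aux

/-- in a complete graph on more than three vertices, every sufficiently
large subset of the complement of a logical line `L_v` is equivalent to `L_v` under
`∼_Π`. -/
theorem large_subsets_sim_logicalLine {V : Type*} [Fintype V] [DecidableEq V]
    (hV : 3 < Fintype.card V) (v : V) (A : Finset {e // e ∈ Edges V})
    (hsub : A ⊆ (logicalLine v)ᶜ)
    (hcard : (logicalLine (V := V) v)ᶜ.card - (Fintype.card V - 2) < A.card) :
    simPi V A (logicalLine v) := by
  have hLA : logicalLine v ⊆ Aᶜ := by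
    intro e he
    rw [Finset.mem_compl]
    intro heA
    exact (Finset.mem_compl.mp (hsub heA)) he
  have key1 : ∀ w ∈ ParityWeights V, ∀ w' ∈ ParityWeights V,
      ((∀ e ∈ A, w' e = w e) ↔ (∀ e ∈ (logicalLine v)ᶜ, w' e = w e)) := by
    rintro w ⟨f, hf⟩ w' ⟨f', hf'⟩
    constructor
    · intro h e he
      obtain ⟨a, b, hab, heab⟩ := edge_two e
      rw [agree_edge hf hf' e hab heab]
      have hA' : ∀ e' ∈ A, ∀ p ∈ e'.1, ∀ q ∈ e'.1,
          (fun z => f z + f' z) p = (fun z => f z + f' z) q := by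
        intro e' he' p hp q hq
        by_cases hpq : p = q
        · rw [hpq]
        · have hcard2 : e'.1.card = 2 := (Finset.mem_powersetCard.mp e'.2).2
          have hsub2 : ({p, q} : Finset V) ⊆ e'.1 := by
            intro z hz
            rcases Finset.mem_insert.mp hz with h' | h'
            · exact h' ▸ hp
            · exact (Finset.mem_singleton.mp h') ▸ hq
          have heq : e'.1 = {p, q} :=
            (Finset.eq_of_subset_of_card_le hsub2
              (by rw [hcard2, Finset.card_pair hpq])).symm
          exact (agree_edge hf hf' e' hpq heq).mp (h e' he')
      have hvnot : v ∉ e.1 := by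
        intro hv
        exact (Finset.mem_compl.mp he) ((mem_logicalLine_iff v e).mpr hv)
      have ha : a ≠ v := by
        intro h'; apply hvnot; rw [heab, ← h']; exact Finset.mem_insert_self _ _
      have hb : b ≠ v := by
        intro h'; apply hvnot; rw [heab, ← h']; simp
      exact g_const hV A hsub hcard _ hA' ha hb
    · intro h e he
      exact h e (hsub he)
  have key2 : ∀ w ∈ ParityWeights V, ∀ w' ∈ ParityWeights V,
      ((∀ e ∈ Aᶜ, w' e = w e) ↔ (∀ e ∈ logicalLine v, w' e = w e)) := by
    rintro w ⟨f, hf⟩ w' ⟨f', hf'⟩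
    constructor
    · intro h e he
      exact h e (hLA he)
    · intro h e _
      obtain ⟨a, b, hab, heab⟩ := edge_two e
      rw [agree_edge hf hf' e hab heab]
      have hgv : ∀ z : V, z ≠ v → f z + f' z = f v + f' v := by
        intro z hz
        have hedge : ({v, z} : Finset V) ∈ Edges V := edge_mem (Ne.symm hz)
        have hmem : (⟨{v, z}, hedge⟩ : {e // e ∈ Edges V}) ∈ logicalLine v := by
          rw [mem_logicalLine_iff]
          exact Finset.mem_insert_self _ _
        exact ((agree_edge hf hf' ⟨{v, z}, hedge⟩ (Ne.symm hz) rfl).mp (h _ hmem)).symm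
      by_cases hav : a = v
      · have hbv : b ≠ v := fun h' => hab (hav.trans h'.symm)
        rw [hav]
        exact (hgv b hbv).symm
      · by_cases hbv : b = v
        · rw [hbv]
          exact hgv a hav
        · exact (hgv a hav).trans (hgv b hbv).symm
  have h1 : classesPi V A = classesPi V (logicalLine v)ᶜ := classesPi_congr _ _ key1
  have h2 : classesPi V Aᶜ = classesPi V (logicalLine v) := classesPi_congr _ _ key2
  unfold simPi
  rw [h1, h2]
  exact Set.pair_comm _ _
end
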